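/- The elements g₀ = w₂²vw₃, g₁ = w₂vw₃w₂, g₂ = vw₃w₂² of G satisfy the braid relations g₀g₁g₀ = g₁g₀g₁, g₁g₂g₁ = g₂g₁g₂, and g₀g₂ = g₂g₀; consequently there is a unique group homomorphism f : B₄ → G with f(σᵢ) = gᵢ⁻¹ for i = 0, 1, 2 (equivalently, f(σᵢ⁻¹) = gᵢ). -/
import Mathlib

/-- The braid relations for the braid group B₄ on four strands (generators σ₀, σ₁, σ₂). -/
def braidRels : Set (FreeGroup (Fin 3)) :=
  {FreeGroup.of 0 * FreeGroup.of 1 * FreeGroup.of 0 *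
     (FreeGroup.of 1 * FreeGroup.of 0 * FreeGroup.of 1)⁻¹,
   FreeGroup.of 1 * FreeGroup.of 2 * FreeGroup.of 1 *
     (FreeGroup.of 2 * FreeGroup.of 1 * FreeGroup.of 2)⁻¹,
   FreeGroup.of 0 * FreeGroup.of 2 * (FreeGroup.of 2 * FreeGroup.of 0)⁻¹}

/-- The braid group on four strands. -/
abbrev B4 : Type := PresentedGroup braidRels

/-- The standard generators σ₀, σ₁, σ₂ of B₄. -/
def σ (i : Fin 3) : B4 := PresentedGroup.of i

/-- The relations for the group G with generators v (index 0), w₂ (index 1), w₃ (index 2):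
v² = w₂⁴ = w₃² = 1, w₃⁻¹w₂w₃ = w₂⁻¹, (vw₃w₂³)³ = 1, (vw₃vw₂²)² = 1. -/
def GRels : Set (FreeGroup (Fin 3)) :=
  {FreeGroup.of 0 ^ 2, FreeGroup.of 1 ^ 4, FreeGroup.of 2 ^ 2,
   (FreeGroup.of 2)⁻¹ * FreeGroup.of 1 * FreeGroup.of 2 * FreeGroup.of 1,
   (FreeGroup.of 0 * FreeGroup.of 2 * FreeGroup.of 1 ^ 3) ^ 3,
   (FreeGroup.of 0 * FreeGroup.of 2 * FreeGroup.of 0 * FreeGroup.of 1 ^ 2) ^ 2}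

/-- The group G. -/
abbrev GGrp : Type := PresentedGroup GRels

/-- The generator v of G. -/
def gv : GGrp := PresentedGroup.of 0

/-- The generator w₂ of G. -/
def gw2 : GGrp := PresentedGroup.of 1

/-- The generator w₃ of G. -/
def gw3 : GGrp := PresentedGroup.of 2

set_option maxHeartbeats 1000000 in
/-- Key algebraic computation: in any group, elements `v, u, t` satisfying the relations of `G`
give rise to elements `u²vt`, `uvtu`, `vtu²` satisfying the braid relations. -/
theorem braid_key {G : Type*} [Group G] (v u t : G)
    (hv : v * v = 1) (ht : t * t = 1) (hu4 : u ^ 4 = 1)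
    (htu : t⁻¹ * u * t * u = 1)
    (hA : (v * t * u ^ 3) ^ 3 = 1)
    (hB : (v * t * v * u ^ 2) ^ 2 = 1) :
    (u ^ 2 * v * t) * (u * v * t * u) * (u ^ 2 * v * t)
      = (u * v * t * u) * (u ^ 2 * v * t) * (u * v * t * u) ∧
    (u * v * t * u) * (v * t * u ^ 2) * (u * v * t * u)
      = (v * t * u ^ 2) * (u * v * t * u) * (v * t * u ^ 2) ∧
    (u ^ 2 * v * t) * (v * t * u ^ 2) = (v * t * u ^ 2) * (u ^ 2 * v * t) := by
  simp only [pow_succ, pow_zero, one_mul] at hu4 hA hB ⊢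
  have hvi : v⁻¹ = v := inv_eq_of_mul_eq_one_right hv
  have hti : t⁻¹ = t := inv_eq_of_mul_eq_one_right ht
  have hui : u⁻¹ = u * u * u :=
    inv_eq_of_mul_eq_one_right (by rw [show u * (u * u * u) = u * u * u * u from by group]; exact hu4)
  have hc2 : u * u * (u * u) = 1 := by
    rw [show u * u * (u * u) = u * u * u * u from by group]; exact hu4
  have hc2i : (u * u)⁻¹ = u * u := inv_eq_of_mul_eq_one_right hc2
  have hu3i : (u * u * u)⁻¹ = u := inv_eq_of_mul_eq_one_right hu4
  have htut : t * u * t = u⁻¹ := by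
    rw [hti] at htu
    exact mul_eq_one_iff_eq_inv.mp htu
  have htc : t * (u * u) * t = u * u := by
    calc t * (u * u) * t = (t * u * t) * (t * u * t) := by
          rw [show (t * u * t) * (t * u * t) = t * u * (t * t) * u * t from by group, ht]; group
    _ = u⁻¹ * u⁻¹ := by rw [htut]
    _ = (u * u * u) * (u * u * u) := by rw [hui]
    _ = u * u * (u * u * u * u) := by group
    _ = u * u := by rw [hu4, mul_one]
  have htc' : t * (u * u) = u * u * t := by
    calc t * (u * u) = t * (u * u) * (t * t) := by rw [ht]; group
    _ = (t * (u * u) * t) * t := by group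
    _ = u * u * t := by rw [htc]
  have hBc : u * u * (v * t * v) = v * t * v * (u * u) := by
    have hb : v * t * v * (u * u) = (v * t * v * (u * u))⁻¹ := eq_inv_of_mul_eq_one_left hB
    have h2 : v * t * v * (u * u) = u * u * (v * t * v) := by
      rw [hb]
      calc (v * t * v * (u * u))⁻¹ = (u * u)⁻¹ * (v⁻¹ * t⁻¹ * v⁻¹) := by group
      _ = u * u * (v * t * v) := by rw [hc2i, hvi, hti]
    exact h2.symm
  have htk : t * (v * (u * u) * v) = v * (u * u) * v * t := by
    calc t * (v * (u * u) * v) = v * v * t * (v * (u * u) * v) := by rw [hv]; group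
    _ = v * (v * t * v * (u * u)) * v := by group
    _ = v * (u * u * (v * t * v)) * v := by rw [← hBc]
    _ = v * (u * u) * v * t * (v * v) := by group
    _ = v * (u * u) * v * t := by rw [hv]; group
  have hyinv : (v * t * (u * u * u))⁻¹ = u * t * v := by
    calc (v * t * (u * u * u))⁻¹ = (u * u * u)⁻¹ * t⁻¹ * v⁻¹ := by group
    _ = u * t * v := by rw [hu3i, hti, hvi]
  have hycy : v * t * (u * u * u) * (u * u) * (u * t * v) = v * (u * u) * v := by
    calc v * t * (u * u * u) * (u * u) * (u * t * v)
        = v * t * (u * u * (u * u * u * u)) * t * v := by group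
    _ = v * (t * (u * u) * t) * v := by rw [hu4, mul_one]; group
    _ = v * (u * u) * v := by rw [htc]
  have hyicy : u * t * v * (u * u) * (v * t * (u * u * u))
      = u * (v * (u * u) * v) * (u * u * u) := by
    calc u * t * v * (u * u) * (v * t * (u * u * u))
        = u * (t * (v * (u * u) * v)) * (t * (u * u * u)) := by group
    _ = u * (v * (u * u) * v * t) * (t * (u * u * u)) := by rw [htk]
    _ = u * (v * (u * u) * v) * (t * t) * (u * u * u) := by group
    _ = u * (v * (u * u) * v) * (u * u * u) := by rw [ht, mul_one]
  have hcancel : u * t * v * (v * t * (u * u * u)) = 1 := by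
    calc u * t * v * (v * t * (u * u * u)) = u * t * (v * v) * t * (u * u * u) := by group
    _ = u * (t * t) * (u * u * u) := by rw [hv]; group
    _ = u * u * u * u := by rw [ht]; group
    _ = 1 := hu4
  have step : u * u * (v * t * (u * u * u))
      = (v * t * (u * u * u) * (u * (v * (u * u) * v) * (u * u * u)) * (u * t * v))
          * (v * t * (u * u * u)) := by
    have hc' : u * u
        = v * t * (u * u * u) * (u * (v * (u * u) * v) * (u * u * u)) * (u * t * v) := by
      rw [← hyicy, ← hyinv]; group
    rw [← hc']
  have SA : v * t * (u * u) * (u * v * t * u) * (v * t * (u * u))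
      = u * (v * (u * u) * v) * (u * u) := by
    calc v * t * (u * u) * (u * v * t * u) * (v * t * (u * u))
        = v * t * (u * u * u) * (v * t * (u * (u * u * u * u)))
            * (v * t * (u * u * (u * u * u * u))) := by rw [hu4]; group
    _ = v * t * (u * u * u) * (v * t * (u * u * u))
          * (u * u * (v * t * (u * u * u))) * (u * u * u) := by group
    _ = v * t * (u * u * u) * (v * t * (u * u * u))
          * ((v * t * (u * u * u) * (u * (v * (u * u) * v) * (u * u * u)) * (u * t * v))
              * (v * t * (u * u * u))) * (u * u * u) := by rw [step]
    _ = v * t * (u * u * u) * (v * t * (u * u * u)) * (v * t * (u * u * u))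
          * ((u * (v * (u * u) * v) * (u * u * u))
              * (u * t * v * (v * t * (u * u * u))) * (u * u * u)) := by group
    _ = (u * (v * (u * u) * v) * (u * u * u)) * (u * u * u) := by
          rw [hA, hcancel, one_mul, mul_one]
    _ = u * (v * (u * u) * v) * (u * u * (u * u * u * u)) := by group
    _ = u * (v * (u * u) * v) * (u * u) := by rw [hu4, mul_one]
  have TB : u * v * t * u * (v * t * (u * u)) * (u * v * t * u)
      = u * (v * (u * u) * v) * (u * u) := by
    calc u * v * t * u * (v * t * (u * u)) * (u * v * t * u)
        = u * (v * t * (u * (u * u * u * u))) * (v * t * (u * u * u))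
            * (v * t * (u * (u * u * u * u))) := by rw [hu4]; group
    _ = u * (v * t * (u * u * u) * (u * u)) * (u * t * v * (v * t * (u * u * u)))
          * (v * t * (u * u * u) * (v * t * (u * u * u) * (u * u))) := by
          rw [hcancel]; group
    _ = u * (v * t * (u * u * u) * (u * u) * (u * t * v))
          * (v * t * (u * u * u) * (v * t * (u * u * u)) * (v * t * (u * u * u)) * (u * u)) := by
          group
    _ = u * (v * (u * u) * v) * (u * u) := by rw [hycy, hA, one_mul]
  have goal2 : u * v * t * u * (v * t * (u * u)) * (u * v * t * u)
      = v * t * (u * u) * (u * v * t * u) * (v * t * (u * u)) := TB.trans SA.symm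
  refine ⟨?_, goal2, ?_⟩
  · calc u * u * v * t * (u * v * t * u) * (u * u * v * t)
        = u * (u * v * t * u * (v * t * (u * u)) * (u * v * t * u)) * u⁻¹ := by group
    _ = u * (v * t * (u * u) * (u * v * t * u) * (v * t * (u * u))) * u⁻¹ := by rw [goal2]
    _ = u * v * t * u * (u * u * v * t) * (u * v * t * u) := by group
  · have h1 : u * u * v * t * (v * t * (u * u)) = v * t * v * t := by
      calc u * u * v * t * (v * t * (u * u)) = u * u * (v * t * v) * (t * (u * u)) := by group
      _ = u * u * (v * t * v) * (u * u * t) := by rw [htc']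
      _ = v * t * v * (u * u) * (u * u) * t := by
            rw [show u * u * (v * t * v) * (u * u * t)
                = (u * u * (v * t * v)) * ((u * u) * t) from by group, hBc]; group
      _ = v * t * v * (u * u * (u * u)) * t := by group
      _ = v * t * v * t := by rw [hc2, mul_one]
    have h2 : v * t * (u * u) * (u * u * v * t) = v * t * v * t := by
      calc v * t * (u * u) * (u * u * v * t) = v * t * (u * u * (u * u)) * (v * t) := by group
      _ = v * t * v * t := by rw [hc2, mul_one]; group
    rw [h1, h2]

theorem GGrp.mk_rel {r : FreeGroup (Fin 3)} (h : r ∈ GRels) :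
    PresentedGroup.mk GRels r = 1 :=
  (QuotientGroup.eq_one_iff r).mpr (Subgroup.subset_normalClosure h)

theorem gv_def : PresentedGroup.mk GRels (FreeGroup.of 0) = gv := rfl
theorem gw2_def : PresentedGroup.mk GRels (FreeGroup.of 1) = gw2 := rfl
theorem gw3_def : PresentedGroup.mk GRels (FreeGroup.of 2) = gw3 := rfl

theorem braid_rels_in_G :
    (gw2 ^ 2 * gv * gw3) * (gw2 * gv * gw3 * gw2) * (gw2 ^ 2 * gv * gw3)
      = (gw2 * gv * gw3 * gw2) * (gw2 ^ 2 * gv * gw3) * (gw2 * gv * gw3 * gw2) ∧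
    (gw2 * gv * gw3 * gw2) * (gv * gw3 * gw2 ^ 2) * (gw2 * gv * gw3 * gw2)
      = (gv * gw3 * gw2 ^ 2) * (gw2 * gv * gw3 * gw2) * (gv * gw3 * gw2 ^ 2) ∧
    (gw2 ^ 2 * gv * gw3) * (gv * gw3 * gw2 ^ 2) = (gv * gw3 * gw2 ^ 2) * (gw2 ^ 2 * gv * gw3) := by
  have hv : gv * gv = 1 := by
    have h := GGrp.mk_rel (r := FreeGroup.of 0 ^ 2) (by simp [GRels])
    rw [map_pow, gv_def, pow_two] at h
    exact h
  have ht : gw3 * gw3 = 1 := by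
    have h := GGrp.mk_rel (r := FreeGroup.of 2 ^ 2) (by simp [GRels])
    rw [map_pow, gw3_def, pow_two] at h
    exact h
  have hu4 : gw2 ^ 4 = 1 := by
    have h := GGrp.mk_rel (r := FreeGroup.of 1 ^ 4) (by simp [GRels])
    rwa [map_pow, gw2_def] at h
  have htu : gw3⁻¹ * gw2 * gw3 * gw2 = 1 := by
    have h := GGrp.mk_rel
      (r := (FreeGroup.of 2)⁻¹ * FreeGroup.of 1 * FreeGroup.of 2 * FreeGroup.of 1)
      (by simp [GRels])
    rwa [map_mul, map_mul, map_mul, map_inv, gw2_def, gw3_def] at h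
  have hA : (gv * gw3 * gw2 ^ 3) ^ 3 = 1 := by
    have h := GGrp.mk_rel (r := (FreeGroup.of 0 * FreeGroup.of 2 * FreeGroup.of 1 ^ 3) ^ 3)
      (by simp [GRels])
    rwa [map_pow, map_mul, map_mul, map_pow, gv_def, gw2_def, gw3_def] at h
  have hB : (gv * gw3 * gv * gw2 ^ 2) ^ 2 = 1 := by
    have h := GGrp.mk_rel
      (r := (FreeGroup.of 0 * FreeGroup.of 2 * FreeGroup.of 0 * FreeGroup.of 1 ^ 2) ^ 2)
      (by simp [GRels])
    rwa [map_pow, map_mul, map_mul, map_mul, map_pow, gv_def, gw2_def, gw3_def] at h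
  exact braid_key gv gw2 gw3 hv ht hu4 htu hA hB

theorem inv_braid_aux {G : Type*} [Group G] {a b : G} (h : a * b * a = b * a * b) :
    a⁻¹ * b⁻¹ * a⁻¹ * (b⁻¹ * a⁻¹ * b⁻¹)⁻¹ = 1 := by
  rw [show a⁻¹ * b⁻¹ * a⁻¹ = (a * b * a)⁻¹ from by group, h]; group

theorem inv_comm_aux {G : Type*} [Group G] {a b : G} (h : a * b = b * a) :
    a⁻¹ * b⁻¹ * (b⁻¹ * a⁻¹)⁻¹ = 1 := by
  rw [show a⁻¹ * b⁻¹ = (b * a)⁻¹ from by group, ← h]; group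

/-- The elements g₀ = w₂²vw₃, g₁ = w₂vw₃w₂, g₂ = vw₃w₂² of G satisfy the braid relations,
and there is a unique homomorphism f : B₄ → G with f(σᵢ) = gᵢ⁻¹ for i = 0, 1, 2. -/
theorem braid_relations_and_hom :
    let g0 : GGrp := gw2 ^ 2 * gv * gw3
    let g1 : GGrp := gw2 * gv * gw3 * gw2
    let g2 : GGrp := gv * gw3 * gw2 ^ 2
    (g0 * g1 * g0 = g1 * g0 * g1 ∧ g1 * g2 * g1 = g2 * g1 * g2 ∧ g0 * g2 = g2 * g0) ∧
    ∃! f : B4 →* GGrp, f (σ 0) = g0⁻¹ ∧ f (σ 1) = g1⁻¹ ∧ f (σ 2) = g2⁻¹ := by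
  intro g0 g1 g2
  obtain ⟨hbr1, hbr2, hbr3⟩ := braid_rels_in_G
  refine ⟨⟨hbr1, hbr2, hbr3⟩, ?_⟩
  have hlift : ∀ r ∈ braidRels, FreeGroup.lift ![g0⁻¹, g1⁻¹, g2⁻¹] r = 1 := by
    intro r hr
    simp only [braidRels, Set.mem_insert_iff, Set.mem_singleton_iff] at hr
    rcases hr with h | h | h <;> subst h <;>
      simp only [map_mul, map_inv, FreeGroup.lift_apply_of, Matrix.cons_val_zero, Matrix.cons_val_one,
        Matrix.head_cons, Matrix.cons_val_two, Matrix.tail_cons]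
    · exact inv_braid_aux hbr1
    · exact inv_braid_aux hbr2
    · exact inv_comm_aux hbr3
  have hf0 : PresentedGroup.toGroup hlift (σ 0) = g0⁻¹ := by
    show PresentedGroup.toGroup hlift (PresentedGroup.of 0) = g0⁻¹
    rw [PresentedGroup.toGroup.of]; simp
  have hf1 : PresentedGroup.toGroup hlift (σ 1) = g1⁻¹ := by
    show PresentedGroup.toGroup hlift (PresentedGroup.of 1) = g1⁻¹
    rw [PresentedGroup.toGroup.of]; simp
  have hf2 : PresentedGroup.toGroup hlift (σ 2) = g2⁻¹ := by
    show PresentedGroup.toGroup hlift (PresentedGroup.of 2) = g2⁻¹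
    rw [PresentedGroup.toGroup.of]; simp
  refine ⟨PresentedGroup.toGroup hlift, ⟨hf0, hf1, hf2⟩, ?_⟩
  rintro g ⟨h0, h1, h2⟩
  apply PresentedGroup.ext
  intro x
  fin_cases x
  · exact h0.trans hf0.symm
  · exact h1.trans hf1.symm
  · exact h2.trans hf2.symm
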